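/- The graph of the sigmoid s̃_δ lies within the ε-neighborhood of the graph of the set-valued function Sgn whenever δ ≤ ε / (2·log(2/ε)) and 0 < ε < 1; i.e., for every x, the distance from (x, s̃_δ(x)) to Graph(Sgn) is at most ε. -/
import Mathlib


theorem stmt_6 (ε δ : ℝ) (hε : 0 < ε) (hε1 : ε < 1)
    (hδ : 0 < δ) (hδε : δ ≤ ε / (2 * Real.log (2 / ε)))
    (Sgn : ℝ → Set ℝ)
    (hneg : ∀ x < (0:ℝ), Sgn x = {-1})
    (hzero : Sgn 0 = Set.Icc (-1) 1)
    (hpos : ∀ x > (0:ℝ), Sgn x = {1})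
    (x : ℝ) :
    EMetric.infEdist ((x, 2 / (1 + Real.exp (-x / δ)) - 1) : ℝ × ℝ)
        {p : ℝ × ℝ | p.2 ∈ Sgn p.1} ≤ ENNReal.ofReal ε := by
  set E := Real.exp (-x / δ) with hE
  set y := 2 / (1 + E) - 1 with hy
  have hEpos : 0 < E := Real.exp_pos _
  have hden : 0 < 1 + E := by linarith
  have hylo : -1 < y := by
    have : 0 < 2 / (1 + E) := by positivity
    simp only [hy]; linarith
  have hyhi : y < 1 := by
    have : 2 / (1 + E) < 2 := by
      rw [div_lt_iff₀ hden]; nlinarith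
    simp only [hy]; linarith
  have h2ε : 1 < 2 / ε := by rw [lt_div_iff₀ hε]; linarith
  have hL : 0 < Real.log (2 / ε) := Real.log_pos h2ε
  have hδL : δ * Real.log (2 / ε) ≤ ε / 2 := by
    have h2 : δ * (2 * Real.log (2 / ε)) ≤ ε := (le_div_iff₀ (by positivity)).mp hδε
    nlinarith
  have key : ∀ p : ℝ × ℝ, p.2 ∈ Sgn p.1 →
      dist ((x, y) : ℝ × ℝ) p ≤ ε →
      EMetric.infEdist ((x, y) : ℝ × ℝ) {p : ℝ × ℝ | p.2 ∈ Sgn p.1} ≤ ENNReal.ofReal ε := by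
    intro p hp hd
    calc EMetric.infEdist ((x, y) : ℝ × ℝ) {p : ℝ × ℝ | p.2 ∈ Sgn p.1}
        ≤ edist ((x, y) : ℝ × ℝ) p := EMetric.infEdist_le_edist_of_mem hp
      _ = ENNReal.ofReal (dist ((x, y) : ℝ × ℝ) p) := edist_dist _ _
      _ ≤ ENNReal.ofReal ε := ENNReal.ofReal_le_ofReal hd
  rcases le_or_gt |x| ε with hx | hx
  · -- use the point (0, y)
    apply key (0, y)
    · show y ∈ Sgn 0
      rw [hzero]
      exact ⟨le_of_lt hylo, le_of_lt hyhi⟩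
    · rw [Prod.dist_eq]
      simp [Real.dist_eq, abs_of_nonneg, hx, le_of_lt hε]
  · have habs : δ * Real.log (2 / ε) < |x| := by
      calc δ * Real.log (2 / ε) ≤ ε / 2 := hδL
        _ < ε := by linarith
        _ < |x| := hx
    rcases lt_or_lt_iff_ne.mpr (fun h0 : x = 0 => by simp [h0] at hx; linarith) with hxneg | hxpos
    · -- x < 0 : use (x, -1)
      apply key (x, -1)
      · show (-1 : ℝ) ∈ Sgn x
        rw [hneg x hxneg]; rfl
      · rw [Prod.dist_eq]
        have hEbig : 2 / ε ≤ E := by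
          rw [hE]
          calc 2 / ε = Real.exp (Real.log (2 / ε)) := (Real.exp_log (by positivity)).symm
            _ ≤ Real.exp (-x / δ) := by
              apply Real.exp_le_exp.mpr
              rw [le_div_iff₀ hδ]
              rw [abs_of_neg hxneg] at habs
              nlinarith
        have h2E : 2 / (1 + E) ≤ ε := by
          rw [div_le_iff₀ hden]
          have : 2 / ε * ε = 2 := by field_simp
          nlinarith
        simp only [dist_self, Real.dist_eq]
        have : |y - -1| = 2 / (1 + E) := by
          have hp : (0:ℝ) < 2 / (1 + E) := by positivity
          rw [hy]; rw [abs_of_nonneg (by linarith : (0:ℝ) ≤ 2 / (1 + E) - 1 - -1)]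
          ring
        rw [this]
        simp [h2E, le_of_lt hε]
    · -- x > 0 : use (x, 1)
      apply key (x, 1)
      · show (1 : ℝ) ∈ Sgn x
        rw [hpos x hxpos]; rfl
      · rw [Prod.dist_eq]
        have hEsmall : E ≤ ε / 2 := by
          rw [hE]
          have heq : ε / 2 = Real.exp (-(Real.log (2 / ε))) := by
            rw [Real.exp_neg, Real.exp_log (by positivity)]
            field_simp
          rw [heq]
          apply Real.exp_le_exp.mpr
          rw [neg_div, neg_le_neg_iff, le_div_iff₀ hδ]
          rw [abs_of_pos hxpos] at habs
          nlinarith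
        have h1y : 1 - y ≤ ε := by
          have : 2 - ε ≤ 2 / (1 + E) := by
            rw [le_div_iff₀ hden]
            nlinarith
          simp only [hy]; linarith
        simp only [dist_self, Real.dist_eq]
        have : |y - 1| = 1 - y := by
          rw [abs_of_nonpos (by linarith)]; ring
        rw [this]
        simp [h1y, le_of_lt hε]
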